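/- arXiv:2512.09224 — 4 statements merged into one kernel-verified Lean document; each statement's English description precedes it below -/
import Mathlib

section
/- Let ρ > 0 and a ∈ ℝ, and consider the functional F(π) = ∫_ℝ [a·u − (ρ/2)·u² − λ·log π(u)] π(u) du over probability densities π on ℝ with finite second moment, where λ > 0. Then F is maximized by the Gaussian density with mean a/ρ and variance λ/ρ, and the maximum value is a²/(2ρ) + (λ/2)·log(2πλ/ρ). -/
open MeasureTheory Real

/-- The entropy-regularized linear-quadratic functional
F(π) = ∫ [a·u − (ρ/2)u² − λ·log π(u)] π(u) du over probability densities with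
finite second moment is maximized by the Gaussian density with mean a/ρ and
variance λ/ρ, with maximum value a²/(2ρ) + (λ/2)·log(2πλ/ρ). -/
theorem stmt3 (ρ a lam : ℝ) (hρ : 0 < ρ) (hlam : 0 < lam)
    (g : ℝ → ℝ)
    (hg : g = fun u => (Real.sqrt (2 * Real.pi * (lam / ρ)))⁻¹ *
      Real.exp (-(u - a / ρ) ^ 2 / (2 * (lam / ρ)))) :
    (∀ p : ℝ → ℝ, (∀ u, 0 ≤ p u) → (∫ u : ℝ, p u = 1) →
      Integrable (fun u => u ^ 2 * p u) →
      Integrable (fun u => (a * u - ρ / 2 * u ^ 2 - lam * Real.log (p u)) * p u) →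
      (∫ u : ℝ, (a * u - ρ / 2 * u ^ 2 - lam * Real.log (p u)) * p u) ≤
        (∫ u : ℝ, (a * u - ρ / 2 * u ^ 2 - lam * Real.log (g u)) * g u)) ∧
    (∫ u : ℝ, (a * u - ρ / 2 * u ^ 2 - lam * Real.log (g u)) * g u) =
      a ^ 2 / (2 * ρ) + (lam / 2) * Real.log (2 * Real.pi * lam / ρ) := by
  have hv : (0:ℝ) < lam / ρ := div_pos hlam hρ
  set v : NNReal := ⟨lam / ρ, hv.le⟩ with hvdef
  have hvne : v ≠ 0 := by
    intro h
    have h2 : (v : ℝ) = 0 := by rw [h]; simp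
    exact hv.ne' h2
  have hvc : (v : ℝ) = lam / ρ := rfl
  have hgG : g = ProbabilityTheory.gaussianPDFReal (a / ρ) v := by
    rw [hg, ProbabilityTheory.gaussianPDFReal_def]
    funext u
    rw [hvc]
  have hgpos : ∀ u, 0 < g u :=
    fun u => hgG ▸ ProbabilityTheory.gaussianPDFReal_pos _ _ u hvne
  have hgint : Integrable g := hgG ▸ ProbabilityTheory.integrable_gaussianPDFReal _ _
  have hgone : ∫ u, g u = 1 := hgG ▸ ProbabilityTheory.integral_gaussianPDFReal_eq_one _ hvne
  set C : ℝ := a ^ 2 / (2 * ρ) + lam / 2 * Real.log (2 * Real.pi * lam / ρ) with hC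
  -- key pointwise identity
  have hlog : ∀ u, lam * Real.log (g u) = a * u - ρ / 2 * u ^ 2 - C := by
    intro u
    have h2 : (0:ℝ) < 2 * Real.pi * (lam / ρ) := by positivity
    rw [hg]
    simp only
    rw [Real.log_mul (by positivity) (Real.exp_pos _).ne', Real.log_inv,
      Real.log_exp, Real.log_sqrt h2.le]
    have : 2 * Real.pi * (lam / ρ) = 2 * Real.pi * lam / ρ := by ring
    rw [this, hC]
    field_simp
    ring
  have hconst : (fun u => (a * u - ρ / 2 * u ^ 2 - lam * Real.log (g u)) * g u)
      = fun u => C * g u := by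
    funext u
    rw [hlog u]
    ring
  have hFg : (∫ u : ℝ, (a * u - ρ / 2 * u ^ 2 - lam * Real.log (g u)) * g u) = C := by
    rw [hconst, integral_const_mul, hgone, mul_one]
  constructor
  · intro p hp0 hp1 hp2 hpF
    -- p is integrable
    have hpint : Integrable p := by
      by_contra h
      rw [integral_undef h] at hp1
      exact one_ne_zero hp1.symm
    -- u * p u is integrable
    have hup : Integrable (fun u => u * p u) := by
      refine (hpint.add hp2).mono (aestronglyMeasurable_id.mul hpint.1) (ae_of_all _ fun u => ?_)
      simp only [norm_mul, Real.norm_eq_abs]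
      have h1 : |u| * |p u| ≤ (1 + u ^ 2) * p u := by
        rw [abs_of_nonneg (hp0 u)]
        apply mul_le_mul_of_nonneg_right _ (hp0 u)
        nlinarith [abs_nonneg u, sq_abs u]
      calc |u| * |p u| ≤ (1 + u ^ 2) * p u := h1
        _ ≤ |p u + u ^ 2 * p u| := by
            rw [abs_of_nonneg (by have := hp0 u; positivity)]; ring_nf; simp [le_refl]
    -- p * log g is integrable
    have hplogg : Integrable (fun u => p u * (lam * Real.log (g u))) := by
      have : (fun u => p u * (lam * Real.log (g u)))
          = fun u => a * (u * p u) - ρ / 2 * (u ^ 2 * p u) - C * p u := by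
        funext u; rw [hlog u]; ring
      rw [this]
      exact ((hup.const_mul a).sub (hp2.const_mul (ρ/2))).sub (hpint.const_mul C)
    -- p * log p is integrable
    have hplogp : Integrable (fun u => p u * (lam * Real.log (p u))) := by
      have : (fun u => p u * (lam * Real.log (p u)))
          = fun u => a * (u * p u) - ρ / 2 * (u ^ 2 * p u)
              - (a * u - ρ / 2 * u ^ 2 - lam * Real.log (p u)) * p u := by
        funext u; ring
      rw [this]
      exact ((hup.const_mul a).sub (hp2.const_mul (ρ/2))).sub hpF
    set h : ℝ → ℝ := fun u => p u * (Real.log (g u) - Real.log (p u)) with hh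
    have hhint : Integrable h := by
      have : h = fun u => lam⁻¹ * (p u * (lam * Real.log (g u)) - p u * (lam * Real.log (p u))) := by
        funext u
        rw [hh]
        field_simp
      rw [this]
      exact ((hplogg.sub hplogp).const_mul _)
    -- pointwise Gibbs bound
    have hptw : ∀ u, h u ≤ g u - p u := by
      intro u
      rcases eq_or_lt_of_le (hp0 u) with h0 | h0
      · simp [hh, ← h0, (hgpos u).le]
      · rw [hh]
        simp only
        rw [← Real.log_div (hgpos u).ne' h0.ne']
        have := Real.log_le_sub_one_of_pos (div_pos (hgpos u) h0)
        calc p u * Real.log (g u / p u) ≤ p u * (g u / p u - 1) :=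
              mul_le_mul_of_nonneg_left this h0.le
          _ = g u - p u := by field_simp
    have hint_h : ∫ u, h u ≤ 0 := by
      have := integral_mono hhint (hgint.sub hpint) hptw
      simp only [Pi.sub_apply] at this
      rwa [integral_sub hgint hpint, hgone, hp1, sub_self] at this
    -- rewrite F(p)
    have hsplit : (fun u => (a * u - ρ / 2 * u ^ 2 - lam * Real.log (p u)) * p u)
        = fun u => C * p u + lam * h u := by
      funext u
      rw [hh]
      simp only
      linear_combination (-(p u)) * hlog u
    rw [hsplit, hFg, integral_add (hpint.const_mul C) (hhint.const_mul lam),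
      integral_const_mul, integral_const_mul, hp1, mul_one]
    nlinarith
  · rw [hFg]
end

section
/- Let A : [0,T] → ℝ be differentiable with A(T) = 0, satisfying A'(t) = 2(μ−r)²·A(t)²/((σ²+δ²)(2A(t) − γ)) for all t, and suppose 2A(t) − γ ≠ 0 for all t. Then A ≡ 0 on [0,T]. -/
open Real Set

/-
Write the Riccati equation as the linear equation `A' = g A` with coefficient
`g = 2(μ - r)² A / ((σ² + δ²)(2A - γ))`. Since `2A - γ` never vanishes on the compact
interval, `g` is continuous and hence bounded there, so `|A'| ≤ K |A|`; Grönwall's inequality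
run backwards from the terminal condition `A(T) = 0` forces `A ≡ 0`.
-/

section BackwardUniqueness

variable {E : Type*} [NormedAddCommGroup E] [NormedSpace ℝ E]

theorem eq_zero_of_norm_deriv_le_mul_norm_of_apply_right_eq_zero {f f' : ℝ → E} {K a b : ℝ}
    (hf : ∀ x ∈ Icc a b, HasDerivAt f (f' x) x) (hb : f b = 0)
    (bound : ∀ x ∈ Icc a b, ‖f' x‖ ≤ K * ‖f x‖) :
    ∀ x ∈ Icc a b, f x = 0 := by
  have hneg : ∀ {x}, x ∈ Icc (-b) (-a) → -x ∈ Icc a b := fun hx =>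
    ⟨le_neg_of_le_neg hx.2, neg_le_of_neg_le hx.1⟩
  have hreflect_deriv : ∀ x ∈ Icc (-b) (-a), HasDerivAt (fun x => f (-x)) (-f' (-x)) x :=
    fun x hx => by simpa [Function.comp_def] using (hf _ (hneg hx)).scomp x (hasDerivAt_neg x)
  have hreflect : ∀ x ∈ Icc (-b) (-a), f (-x) = 0 := by
    refine eq_zero_of_abs_deriv_le_mul_abs_self_of_eq_zero_right (K := K)
      (fun x hx => (hreflect_deriv x hx).continuousAt.continuousWithinAt)
      (fun x hx => (hreflect_deriv x (Ico_subset_Icc_self hx)).hasDerivWithinAt)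
      (by simpa using hb) fun x hx => ?_
    simpa only [norm_neg] using bound _ (hneg (Ico_subset_Icc_self hx))
  intro x hx
  simpa using hreflect (-x) ⟨neg_le_neg hx.2, neg_le_neg hx.1⟩

theorem eq_zero_of_hasDerivAt_smul_self_of_apply_right_eq_zero {f : ℝ → E} {g : ℝ → ℝ}
    {a b : ℝ}
    (hf : ∀ x ∈ Icc a b, HasDerivAt f (g x • f x) x) (hg : ContinuousOn g (Icc a b))
    (hb : f b = 0) :
    ∀ x ∈ Icc a b, f x = 0 := by
  obtain ⟨K, hK⟩ := isCompact_Icc.exists_bound_of_continuousOn hg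
  refine eq_zero_of_norm_deriv_le_mul_norm_of_apply_right_eq_zero (K := K) hf hb fun x hx => ?_
  rw [norm_smul]
  exact mul_le_mul_of_nonneg_right (hK x hx) (norm_nonneg _)

end BackwardUniqueness

theorem stmt6_general (T μ r γ σ δ : ℝ) (hσ : 0 < σ) (A : ℝ → ℝ)
    (hderiv : ∀ t ∈ Icc (0 : ℝ) T,
      HasDerivAt A (2 * (μ - r) ^ 2 * (A t) ^ 2 /
        ((σ ^ 2 + δ ^ 2) * (2 * A t - γ))) t)
    (hne : ∀ t ∈ Icc (0 : ℝ) T, 2 * A t - γ ≠ 0)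
    (hterm : A T = 0) :
    ∀ t ∈ Icc (0 : ℝ) T, A t = 0 := by
  set g : ℝ → ℝ := fun t => 2 * (μ - r) ^ 2 * A t / ((σ ^ 2 + δ ^ 2) * (2 * A t - γ))
  have hlinear : ∀ t ∈ Icc (0 : ℝ) T, HasDerivAt A (g t • A t) t := fun t ht => by
    convert hderiv t ht using 1
    simp only [g, smul_eq_mul]
    ring
  have hA : ContinuousOn A (Icc 0 T) := fun t ht =>
    (hderiv t ht).continuousAt.continuousWithinAt
  have hg : ContinuousOn g (Icc 0 T) :=
    (continuousOn_const.mul hA).div (continuousOn_const.mul ((continuousOn_const.mul hA).sub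
      continuousOn_const)) fun t ht => mul_ne_zero (by positivity) (hne t ht)
  exact eq_zero_of_hasDerivAt_smul_self_of_apply_right_eq_zero hlinear hg hterm

/-- If A is differentiable on [0,T] with A(T) = 0 and satisfies the Riccati-type
ODE A'(t) = 2(μ−r)²A(t)²/((σ²+δ²)(2A(t) − γ)), with 2A(t) − γ ≠ 0 throughout,
then A ≡ 0 on [0,T]. -/
theorem stmt6 (T μ r γ σ δ : ℝ) (hT : 0 < T) (hγ : 0 < γ) (hσ : 0 < σ)
    (hδ : 0 ≤ δ) (A : ℝ → ℝ)
    (hderiv : ∀ t ∈ Icc (0 : ℝ) T,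
      HasDerivAt A (2 * (μ - r) ^ 2 * (A t) ^ 2 /
        ((σ ^ 2 + δ ^ 2) * (2 * A t - γ))) t)
    (hne : ∀ t ∈ Icc (0 : ℝ) T, 2 * A t - γ ≠ 0)
    (hterm : A T = 0) :
    ∀ t ∈ Icc (0 : ℝ) T, A t = 0 :=
  stmt6_general T μ r γ σ δ hσ A hderiv hne hterm
end

section
/- With g(t,x) = x + h(t) where h(t) = (T−t)(μ−r)²/(γ(σ²+δ²)), and the equilibrium policy π* Gaussian with mean (μ−r)/(γ(σ²+δ²)) and variance λ/(γ(σ²+δ²)), the function g satisfies ∂_t g(t,x) + ∫_ℝ u(μ−r) π*(u) du = 0 for all (t,x) ∈ [0,T]×ℝ, and g(T,x) = x. -/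
open MeasureTheory Real Set

lemma gauss_mean (m v : ℝ) (hv : 0 < v) :
    ∫ u : ℝ, u * ((Real.sqrt (2 * Real.pi * v))⁻¹ *
      Real.exp (-(u - m) ^ 2 / (2 * v))) = m := by
  set c : ℝ := (Real.sqrt (2 * Real.pi * v))⁻¹ with hc
  have key : (∫ u : ℝ, u * (c * Real.exp (-(u - m) ^ 2 / (2 * v))))
      = ∫ u : ℝ, (u + m) * (c * Real.exp (-u ^ 2 / (2 * v))) := by
    rw [← integral_add_right_eq_self
      (fun u : ℝ => u * (c * Real.exp (-(u - m) ^ 2 / (2 * v)))) m]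
    simp
  rw [key]
  have hb : (0:ℝ) < (2 * v)⁻¹ := by positivity
  have hint1 : Integrable (fun u : ℝ => u * Real.exp (-(2*v)⁻¹ * u ^ 2)) := by
    simpa [sq] using integrable_mul_exp_neg_mul_sq hb
  have hexp : ∀ u : ℝ, Real.exp (-u ^ 2 / (2 * v)) = Real.exp (-(2*v)⁻¹ * u ^ 2) := by
    intro u; ring_nf
  have hint2 : Integrable (fun u : ℝ => Real.exp (-(2*v)⁻¹ * u ^ 2)) :=
    by simpa [sq] using integrable_exp_neg_mul_sq hb
  have split : (∫ u : ℝ, (u + m) * (c * Real.exp (-u ^ 2 / (2 * v))))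
      = (∫ u : ℝ, c * (u * Real.exp (-(2*v)⁻¹ * u ^ 2)))
        + ∫ u : ℝ, m * (c * Real.exp (-(2*v)⁻¹ * u ^ 2)) := by
    rw [← integral_add (hint1.const_mul c) ((hint2.const_mul c).const_mul m)]
    congr 1 with u
    rw [hexp u]; ring
  rw [split]
  have hodd : (∫ u : ℝ, u * Real.exp (-(2*v)⁻¹ * u ^ 2)) = 0 := by
    have h1 := integral_neg_eq_self (fun u : ℝ => u * Real.exp (-(2*v)⁻¹ * u ^ 2)) (volume : Measure ℝ)
    simp only [neg_sq, neg_mul] at h1 ⊢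
    rw [integral_neg] at h1
    linarith
  rw [integral_const_mul, hodd, mul_zero, zero_add, integral_const_mul, integral_const_mul]
  -- now m * (c * ∫ exp) = m, since c * ∫ exp = 1
  have hgauss : (∫ u : ℝ, Real.exp (-(2*v)⁻¹ * u ^ 2)) = Real.sqrt (Real.pi / (2*v)⁻¹) := by
    simpa [sq] using integral_gaussian (2*v)⁻¹
  rw [hgauss]
  have hpi : Real.pi / (2*v)⁻¹ = 2 * Real.pi * v := by
    field_simp
  rw [hpi, hc, inv_mul_cancel₀ (by positivity : Real.sqrt (2 * Real.pi * v) ≠ 0), mul_one]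

/-- With g(t,x) = x + h(t), h(t) = (T−t)(μ−r)²/(γ(σ²+δ²)), and π* the equilibrium
Gaussian policy, g satisfies the extended HJB equation
∂_t g(t,x) + ∫ u(μ−r) π*(u) du = 0 on [0,T]×ℝ, and g(T,x) = x. -/
theorem stmt15 (T μ r γ lam σ δ : ℝ) (hT : 0 < T) (hγ : 0 < γ) (hlam : 0 < lam)
    (hσ : 0 < σ) (hδ : 0 ≤ δ)
    (h : ℝ → ℝ) (hh : h = fun t => (T - t) * (μ - r) ^ 2 / (γ * (σ ^ 2 + δ ^ 2)))
    (g : ℝ → ℝ → ℝ) (hg : g = fun t x => x + h t)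
    (pstar : ℝ → ℝ)
    (hpstar : pstar = fun u =>
      (Real.sqrt (2 * Real.pi * (lam / (γ * (σ ^ 2 + δ ^ 2)))))⁻¹ *
        Real.exp (-(u - (μ - r) / (γ * (σ ^ 2 + δ ^ 2))) ^ 2 /
          (2 * (lam / (γ * (σ ^ 2 + δ ^ 2)))))) :
    (∀ t ∈ Icc (0 : ℝ) T, ∀ x : ℝ,
      deriv (fun s => g s x) t + ∫ u : ℝ, u * (μ - r) * pstar u = 0) ∧
    ∀ x : ℝ, g T x = x := by
  subst hh hg hpstar
  set K : ℝ := γ * (σ ^ 2 + δ ^ 2) with hK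
  have hKpos : 0 < K := by positivity
  constructor
  · intro t ht x
    have hderiv : deriv (fun s => x + (T - s) * (μ - r) ^ 2 / K) t
        = -((μ - r) ^ 2 / K) := by
      have h1 : HasDerivAt (fun s : ℝ => x + (T - s) * (μ - r) ^ 2 / K)
          (-1 * (μ - r) ^ 2 / K) t :=
        ((((hasDerivAt_id t).const_sub T).mul_const ((μ - r) ^ 2)).div_const K).const_add x
      rw [h1.deriv]; ring
    rw [hderiv]
    have hint : (∫ u : ℝ, u * (μ - r) *
        ((Real.sqrt (2 * Real.pi * (lam / K)))⁻¹ *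
          Real.exp (-(u - (μ - r) / K) ^ 2 / (2 * (lam / K)))))
        = (μ - r) * ((μ - r) / K) := by
      have hm := gauss_mean ((μ - r) / K) (lam / K) (by positivity)
      calc (∫ u : ℝ, u * (μ - r) *
          ((Real.sqrt (2 * Real.pi * (lam / K)))⁻¹ *
            Real.exp (-(u - (μ - r) / K) ^ 2 / (2 * (lam / K)))))
          = ∫ u : ℝ, (μ - r) * (u *
            ((Real.sqrt (2 * Real.pi * (lam / K)))⁻¹ *
              Real.exp (-(u - (μ - r) / K) ^ 2 / (2 * (lam / K))))) := by
            congr 1 with u; ring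
        _ = (μ - r) * ((μ - r) / K) := by rw [integral_const_mul, hm]
    rw [hint]
    field_simp
    ring
  · intro x
    simp
end

section
/- Define V(t,x) = x + C(t) with C(t) = (T−t)[(μ−r)²/(2γ(σ²+δ²)) + (λ/2)log(2πλ/(γ(σ²+δ²)))], and g(t,x) = x + h(t) with h(t) = (T−t)(μ−r)²/(γ(σ²+δ²)). Let π* be Gaussian with mean m* = (μ−r)/(γ(σ²+δ²)) and variance v* = λ/(γ(σ²+δ²)). Then the extended HJB equation evaluated at π* reduces to C'(t) + m*(μ−r) − (γ/2)(σ²+δ²)(v* + (m*)²) + λH(π*) = 0; explicitly, C'(t) + (μ−r)²/(2γ(σ²+δ²)) + (λ/2)log(2πλ/(γ(σ²+δ²))) = 0. -/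
open Real

/-- Verification of the extended HJB system for V(t,x) = x + C(t): with
m* = (μ−r)/(γ(σ²+δ²)), v* = λ/(γ(σ²+δ²)), C'(t) = −[(μ−r)²/(2γ(σ²+δ²)) +
(λ/2)log(2πλ/(γ(σ²+δ²)))] and H(π*) = (1/2)log(2πe·v*), the HJB expression
C'(t) + m*(μ−r) − (γ(σ²+δ²)/2)(v* + m*²) + λ·H(π*) vanishes. -/
theorem stmt16 (μ r γ lam σ δ : ℝ) (hγ : 0 < γ) (hlam : 0 < lam) (hσ : 0 < σ)
    (hδ : 0 ≤ δ)
    (mstar vstar : ℝ)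
    (hm : mstar = (μ - r) / (γ * (σ ^ 2 + δ ^ 2)))
    (hv : vstar = lam / (γ * (σ ^ 2 + δ ^ 2))) :
    -((μ - r) ^ 2 / (2 * γ * (σ ^ 2 + δ ^ 2)) +
        (lam / 2) * Real.log (2 * Real.pi * lam / (γ * (σ ^ 2 + δ ^ 2)))) +
      mstar * (μ - r) -
      (γ * (σ ^ 2 + δ ^ 2) / 2) * (vstar + mstar ^ 2) +
      lam * ((1 / 2) * Real.log (2 * Real.pi * Real.exp 1 * vstar)) = 0 := by
  have hA : 0 < γ * (σ ^ 2 + δ ^ 2) := by positivity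
  have hx : 0 < 2 * Real.pi * lam / (γ * (σ ^ 2 + δ ^ 2)) := by positivity
  have hlog : Real.log (2 * Real.pi * Real.exp 1 * vstar)
      = Real.log (2 * Real.pi * lam / (γ * (σ ^ 2 + δ ^ 2))) + 1 := by
    have : 2 * Real.pi * Real.exp 1 * vstar
        = (2 * Real.pi * lam / (γ * (σ ^ 2 + δ ^ 2))) * Real.exp 1 := by
      rw [hv]; ring
    rw [this, Real.log_mul (ne_of_gt hx) (Real.exp_pos 1).ne', Real.log_exp]
  rw [hlog, hm, hv]
  field_simp
  ring
end
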